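/- Let G be a graph with a vertex-cut {u,v} and let G₁, G₂ be induced subgraphs with V(G₁) ∪ V(G₂) = V(G) and V(G₁) ∩ V(G₂) = {u,v}. If uv is an edge of G, then χ_f(G) = max{χ_f(G₁), χ_f(G₂)}. -/

import Mathlib

/-- An `(a:b)`-coloring of `G`. -/
def HasFracColoring {V : Type*} (G : SimpleGraph V) (a b : ℕ) : Prop :=
  ∃ f : V → Finset (Fin a), (∀ v, (f v).card = b) ∧
    ∀ u v, G.Adj u v → Disjoint (f u) (f v)

/-- The fractional chromatic number. -/
noncomputable def fracChrom {V : Type*} (G : SimpleGraph V) : ℝ :=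
  sInf {x : ℝ | ∃ a b : ℕ, 0 < a ∧ 0 < b ∧ HasFracColoring G a b ∧ x = (a : ℝ) / b}

/-- `S` is a vertex-cut of `G` if deleting `S` leaves a disconnected graph. -/
def IsVertexCut {V : Type*} (G : SimpleGraph V) (S : Set V) : Prop :=
  ¬ (G.induce (Sᶜ : Set V)).Preconnected

/-!
An `(a₁:b₁)`-colouring of `G₁` and an `(a₂:b₂)`-colouring of `G₂` become colourings of ratio
`max (a₁/b₁) (a₂/b₂)` with the same parameters after replacing each colour by `b₂`, resp. `b₁`,
copies and adding unused colours. Since `uv` is an edge, `u` and `v` then receive disjoint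
`b`-sets on either side, so a permutation of the palette makes the colouring of `G₂` agree with
that of `G₁` on `{u, v}`, and the two colourings glue. The reverse inequality holds because
colourings restrict to induced subgraphs.
-/

open Finset SimpleGraph

section

variable {V W α β : Type*}

theorem Finset.exists_perm_map_eq_of_disjoint {A B C D : Finset β}
    (hAB : Disjoint A B) (hCD : Disjoint C D) (hAC : #A = #C) (hBD : #B = #D) :
    ∃ σ : Equiv.Perm β, A.map σ.toEmbedding = C ∧ B.map σ.toEmbedding = D := by
  let eA := A.equivOfCardEq hAC
  let eB := B.equivOfCardEq hBD
  have hinj₁ : Function.Injective (Sum.elim (fun x : A => (x : β)) fun x : B => (x : β)) :=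
    Subtype.val_injective.sumElim Subtype.val_injective fun x y hxy =>
      disjoint_left.1 hAB x.2 (hxy ▸ y.2)
  have hinj₂ : Function.Injective
      (Sum.elim (fun x : A => (eA x : β)) fun x : B => (eB x : β)) :=
    (Subtype.val_injective.comp eA.injective).sumElim
      (Subtype.val_injective.comp eB.injective) fun x y (hxy : (eA x : β) = eB y) =>
      disjoint_left.1 hCD (eA x).2 (hxy ▸ (eB y).2)
  obtain ⟨σ, hσ⟩ := Equiv.Perm.exists_extending_pair _ _ hinj₁ hinj₂
  have map_eq {S T : Finset β} (hST : #S = #T) (hσS : ∀ x ∈ S, σ x ∈ T) :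
      S.map σ.toEmbedding = T :=
    eq_of_subset_of_card_le (fun y hy => by
      obtain ⟨x, hx, rfl⟩ := mem_map.1 hy
      exact hσS x hx) (by rw [card_map, hST])
  refine ⟨σ, map_eq hAC fun x hx => ?_, map_eq hBD fun x hx => ?_⟩
  · rw [show σ x = eA ⟨x, hx⟩ from hσ (.inl ⟨x, hx⟩)]
    exact (eA _).2
  · rw [show σ x = eB ⟨x, hx⟩ from hσ (.inr ⟨x, hx⟩)]
    exact (eB _).2

def IsFracColoring (G : SimpleGraph V) (b : ℕ) (f : V → Finset α) : Prop :=
  (∀ v, #(f v) = b) ∧ ∀ u v, G.Adj u v → Disjoint (f u) (f v)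

theorem hasFracColoring_iff {G : SimpleGraph V} {a b : ℕ} :
    HasFracColoring G a b ↔ ∃ f : V → Finset (Fin a), IsFracColoring G b f :=
  Iff.rfl

namespace IsFracColoring

variable {G : SimpleGraph V} {b : ℕ} {f : V → Finset α}

theorem map (hf : IsFracColoring G b f) (e : α ↪ β) :
    IsFracColoring G b fun v => (f v).map e :=
  ⟨fun v => by rw [card_map, hf.1], fun u v huv => (disjoint_map e).2 (hf.2 u v huv)⟩

theorem comp_hom {H : SimpleGraph W} (hf : IsFracColoring G b f) (φ : H →g G) :
    IsFracColoring H b (f ∘ φ) :=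
  ⟨fun w => hf.1 (φ w), fun _ _ hxy => hf.2 _ _ (φ.map_adj hxy)⟩

theorem product (hf : IsFracColoring G b f) (k : ℕ) :
    IsFracColoring G (b * k) fun v => f v ×ˢ (univ : Finset (Fin k)) :=
  ⟨fun v => by rw [card_product, hf.1, card_univ, Fintype.card_fin],
    fun u v huv => disjoint_product.2 (Or.inl (hf.2 u v huv))⟩

theorem glue {s₁ s₂ : Set V} (hunion : s₁ ∪ s₂ = Set.univ)
    (hedges : ∀ x y, G.Adj x y → (x ∈ s₁ ∧ y ∈ s₁) ∨ (x ∈ s₂ ∧ y ∈ s₂))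
    {f₁ : s₁ → Finset α} {f₂ : s₂ → Finset α}
    (hf₁ : IsFracColoring (G.induce s₁) b f₁) (hf₂ : IsFracColoring (G.induce s₂) b f₂)
    (hagree : ∀ x (h₁ : x ∈ s₁) (h₂ : x ∈ s₂), f₁ ⟨x, h₁⟩ = f₂ ⟨x, h₂⟩) :
    ∃ f : V → Finset α, IsFracColoring G b f := by
  classical
  have mem₂ (x : V) (hx : x ∉ s₁) : x ∈ s₂ :=
    ((hunion ▸ Set.mem_univ x : x ∈ s₁ ∪ s₂)).resolve_left hx
  let f x := if hx : x ∈ s₁ then f₁ ⟨x, hx⟩ else f₂ ⟨x, mem₂ x hx⟩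
  have hf_eq₁ (x : V) (hx : x ∈ s₁) : f x = f₁ ⟨x, hx⟩ := dif_pos hx
  have hf_eq₂ (x : V) (hx : x ∈ s₂) : f x = f₂ ⟨x, hx⟩ := by
    by_cases h₁ : x ∈ s₁
    · exact (dif_pos h₁).trans (hagree x h₁ hx)
    · exact dif_neg h₁
  refine ⟨f, fun x => ?_, fun x y hxy => ?_⟩
  · by_cases h₁ : x ∈ s₁
    · rw [hf_eq₁ x h₁, hf₁.1]
    · rw [hf_eq₂ x (mem₂ x h₁), hf₂.1]
  · rcases hedges x y hxy with ⟨hx, hy⟩ | ⟨hx, hy⟩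
    · rw [hf_eq₁ x hx, hf_eq₁ y hy]
      exact hf₁.2 ⟨x, hx⟩ ⟨y, hy⟩ hxy
    · rw [hf_eq₂ x hx, hf_eq₂ y hy]
      exact hf₂.2 ⟨x, hx⟩ ⟨y, hy⟩ hxy

end IsFracColoring

namespace HasFracColoring

variable {G : SimpleGraph V} {a b : ℕ}

theorem comp_hom {H : SimpleGraph W} (h : HasFracColoring G a b) (φ : H →g G) :
    HasFracColoring H a b :=
  let ⟨f, hf⟩ := hasFracColoring_iff.1 h
  ⟨f ∘ φ, hf.comp_hom φ⟩

theorem mono (h : HasFracColoring G a b) {a' : ℕ} (ha : a ≤ a') : HasFracColoring G a' b :=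
  let ⟨_, hf⟩ := hasFracColoring_iff.1 h
  ⟨_, hf.map (Fin.castLEEmb ha)⟩

theorem mul (h : HasFracColoring G a b) (k : ℕ) : HasFracColoring G (a * k) (b * k) :=
  let ⟨_, hf⟩ := hasFracColoring_iff.1 h
  ⟨_, (hf.product k).map finProdFinEquiv.toEmbedding⟩

theorem glue_of_adj {u v : V} {s₁ s₂ : Set V} (hunion : s₁ ∪ s₂ = Set.univ)
    (hinter : s₁ ∩ s₂ = {u, v})
    (hedges : ∀ x y, G.Adj x y → (x ∈ s₁ ∧ y ∈ s₁) ∨ (x ∈ s₂ ∧ y ∈ s₂))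
    (hadj : G.Adj u v)
    (h₁ : HasFracColoring (G.induce s₁) a b) (h₂ : HasFracColoring (G.induce s₂) a b) :
    HasFracColoring G a b := by
  rw [hasFracColoring_iff] at h₁ h₂ ⊢
  obtain ⟨f₁, hf₁⟩ := h₁
  obtain ⟨f₂, hf₂⟩ := h₂
  have hmem (x : V) : x ∈ s₁ ∩ s₂ ↔ x = u ∨ x = v := by simp [hinter]
  obtain ⟨hu₁, hu₂⟩ := (hmem u).2 (Or.inl rfl)
  obtain ⟨hv₁, hv₂⟩ := (hmem v).2 (Or.inr rfl)
  obtain ⟨σ, hσu, hσv⟩ := exists_perm_map_eq_of_disjoint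
    (hf₂.2 ⟨u, hu₂⟩ ⟨v, hv₂⟩ hadj) (hf₁.2 ⟨u, hu₁⟩ ⟨v, hv₁⟩ hadj)
    (by rw [hf₂.1, hf₁.1]) (by rw [hf₂.1, hf₁.1])
  refine hf₁.glue hunion hedges (hf₂.map σ.toEmbedding) fun x hx₁ hx₂ => ?_
  rcases (hmem x).1 ⟨hx₁, hx₂⟩ with rfl | rfl
  · exact hσu.symm
  · exact hσv.symm

end HasFracColoring

theorem hasFracColoring_natCard_one [Finite V] (G : SimpleGraph V) :
    HasFracColoring G (Nat.card V) 1 :=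
  ⟨fun v => {Finite.equivFin V v}, fun _ => card_singleton _, fun _ _ huv =>
    disjoint_singleton.2 ((Finite.equivFin V).injective.ne (G.ne_of_adj huv))⟩

theorem max_div_div_eq_max_mul_div {K : Type*} [Field K] [LinearOrder K] [IsStrictOrderedRing K]
    {a₁ a₂ b₁ b₂ : K} (hb₁ : 0 < b₁) (hb₂ : 0 < b₂) :
    max (a₁ / b₁) (a₂ / b₂) = max (a₁ * b₂) (a₂ * b₁) / (b₁ * b₂) := by
  rw [← max_div_div_right (mul_pos hb₁ hb₂).le, mul_div_mul_right _ _ hb₂.ne',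
    mul_comm b₁ b₂, mul_div_mul_right _ _ hb₁.ne']

theorem csInf_le_max_csInf {L : Type*} [ConditionallyCompleteLinearOrder L] {S S₁ S₂ : Set L}
    (hS : BddBelow S) (h₁ : S₁.Nonempty) (h₂ : S₂.Nonempty)
    (h : ∀ x ∈ S₁, ∀ y ∈ S₂, max x y ∈ S) : sInf S ≤ max (sInf S₁) (sInf S₂) := by
  by_contra! hlt
  obtain ⟨x, hx, hxS⟩ := exists_lt_of_csInf_lt h₁ ((le_max_left _ _).trans_lt hlt)
  obtain ⟨y, hy, hyS⟩ := exists_lt_of_csInf_lt h₂ ((le_max_right _ _).trans_lt hlt)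
  exact (csInf_le hS (h x hx y hy)).not_gt (max_lt hxS hyS)

def fracRatios (G : SimpleGraph V) : Set ℝ :=
  {x | ∃ a b : ℕ, 0 < a ∧ 0 < b ∧ HasFracColoring G a b ∧ x = (a : ℝ) / b}

theorem fracChrom_eq_sInf_fracRatios (G : SimpleGraph V) : fracChrom G = sInf (fracRatios G) :=
  rfl

theorem fracRatios_bddBelow (G : SimpleGraph V) : BddBelow (fracRatios G) :=
  ⟨0, by
    rintro _ ⟨a, b, -, -, -, rfl⟩
    positivity⟩

theorem fracRatios_nonempty [Finite V] [Nonempty V] (G : SimpleGraph V) :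
    (fracRatios G).Nonempty :=
  ⟨_, Nat.card V, 1, Nat.card_pos, one_pos, hasFracColoring_natCard_one G, rfl⟩

theorem fracRatios_subset_of_hom {G : SimpleGraph V} {H : SimpleGraph W} (φ : H →g G) :
    fracRatios G ⊆ fracRatios H := by
  rintro _ ⟨a, b, ha, hb, h, rfl⟩
  exact ⟨a, b, ha, hb, h.comp_hom φ, rfl⟩

theorem fracChrom_le_of_hom [Finite V] [Nonempty V] {G : SimpleGraph V} {H : SimpleGraph W}
    (φ : H →g G) : fracChrom H ≤ fracChrom G := by
  rw [fracChrom_eq_sInf_fracRatios, fracChrom_eq_sInf_fracRatios]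
  exact csInf_le_csInf (fracRatios_bddBelow H) (fracRatios_nonempty G) (fracRatios_subset_of_hom φ)

theorem max_mem_fracRatios_of_two_cut_edge {G : SimpleGraph V} {u v : V} {s₁ s₂ : Set V}
    (hunion : s₁ ∪ s₂ = Set.univ) (hinter : s₁ ∩ s₂ = {u, v})
    (hedges : ∀ x y, G.Adj x y → (x ∈ s₁ ∧ y ∈ s₁) ∨ (x ∈ s₂ ∧ y ∈ s₂))
    (hadj : G.Adj u v) {x₁ x₂ : ℝ} (hx₁ : x₁ ∈ fracRatios (G.induce s₁))
    (hx₂ : x₂ ∈ fracRatios (G.induce s₂)) : max x₁ x₂ ∈ fracRatios G := by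
  obtain ⟨a₁, b₁, ha₁, hb₁, h₁, rfl⟩ := hx₁
  obtain ⟨a₂, b₂, -, hb₂, h₂, rfl⟩ := hx₂
  have h₁' := (h₁.mul b₂).mono (le_max_left (a₁ * b₂) (a₂ * b₁))
  have h₂' := (h₂.mul b₁).mono (le_max_right (a₁ * b₂) (a₂ * b₁))
  rw [mul_comm b₂ b₁] at h₂'
  refine ⟨_, _, (Nat.mul_pos ha₁ hb₂).trans_le (le_max_left _ _), Nat.mul_pos hb₁ hb₂,
    h₁'.glue_of_adj hunion hinter hedges hadj h₂', ?_⟩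
  rw [max_div_div_eq_max_mul_div (Nat.cast_pos.2 hb₁) (Nat.cast_pos.2 hb₂)]
  push_cast
  rfl

end

theorem fracChrom_eq_max_of_two_cut_edge_general {V : Type*} [Fintype V]
    (G : SimpleGraph V) (u v : V)
    (s₁ s₂ : Set V) (hunion : s₁ ∪ s₂ = Set.univ)
    (hinter : s₁ ∩ s₂ = {u, v})
    (hedges : ∀ x y, G.Adj x y → (x ∈ s₁ ∧ y ∈ s₁) ∨ (x ∈ s₂ ∧ y ∈ s₂))
    (hadj : G.Adj u v) :
    fracChrom G = max (fracChrom (G.induce s₁)) (fracChrom (G.induce s₂)) := by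
  have : Nonempty V := ⟨u⟩
  have hne (s : Set V) : (fracRatios (G.induce s)).Nonempty :=
    (fracRatios_nonempty G).mono (fracRatios_subset_of_hom (Embedding.induce s).toHom)
  refine le_antisymm ?_ ?_
  · simp only [fracChrom_eq_sInf_fracRatios]
    exact csInf_le_max_csInf (fracRatios_bddBelow G) (hne s₁) (hne s₂) fun _ hx₁ _ hx₂ =>
      max_mem_fracRatios_of_two_cut_edge hunion hinter hedges hadj hx₁ hx₂
  · exact max_le (fracChrom_le_of_hom (Embedding.induce s₁).toHom)
      (fracChrom_le_of_hom (Embedding.induce s₂).toHom)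

/-- If `{u,v}` is a vertex-cut with `uv ∈ E(G)`, and `G` is the union of the induced
subgraphs `G₁ = G[s₁]` and `G₂ = G[s₂]` with `s₁ ∩ s₂ = {u,v}`, then
`χ_f(G) = max (χ_f(G₁), χ_f(G₂))`. -/
theorem fracChrom_eq_max_of_two_cut_edge {V : Type*} [Fintype V]
    (G : SimpleGraph V) (u v : V) (huv : u ≠ v)
    (s₁ s₂ : Set V) (hunion : s₁ ∪ s₂ = Set.univ)
    (hinter : s₁ ∩ s₂ = {u, v})
    (hedges : ∀ x y, G.Adj x y → (x ∈ s₁ ∧ y ∈ s₁) ∨ (x ∈ s₂ ∧ y ∈ s₂))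
    (hcut : IsVertexCut G ({u, v} : Set V))
    (hadj : G.Adj u v) :
    fracChrom G = max (fracChrom (G.induce s₁)) (fracChrom (G.induce s₂)) :=
  fracChrom_eq_max_of_two_cut_edge_general G u v s₁ s₂ hunion hinter hedges hadj
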